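/- Suppose a ≠ 0 and a²/4 < b < 10a²/9. Then there exist two real roots x₁, x₂ of A with 0 < |x₁| < |x₂| and with x₁ and x₂ both of opposite sign to a (that is, x₂ < x₁ < 0 if a > 0, and 0 < x₁ < x₂ if a < 0), and A(x) ≥ 0 for every x in the closed interval with endpoints x₁ and 0. -/

import Mathlib

/-!
For `a > 0` the quartic is positive at `0` (as `b < 10a²/9`), negative at `m = -a/(2b)`
(as `b > a²/4`) and positive again at `-2a/b`. Take `x₁` the largest zero in `(m, 0)`: a negative
value of `A` on `[x₁, 0]` would give, by the intermediate value theorem, a larger zero. A zero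
`x₂ ∈ (-2a/b, m)` lies further out.
The case `a < 0` follows from the symmetry `A_{-a}(-x) = A_a(x)`.
-/

/-- The polynomial `A(x)`. -/
def Apoly (a b x : ℝ) : ℝ :=
  10 * a ^ 2 - 9 * b + a * (30 * b + 4 * a ^ 2) * x + b * (36 * b + 16 * a ^ 2) * x ^ 2
    + 24 * a * b ^ 2 * x ^ 3 + 9 * b ^ 3 * x ^ 4

open Set

section LastZero

variable {α δ : Type*} [ConditionallyCompleteLinearOrder α] [TopologicalSpace α] [OrderTopology α]
  [DenselyOrdered α] [LinearOrder δ] [TopologicalSpace δ] [OrderClosedTopology δ] [Zero δ]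

theorem exists_mem_Ioo_eq_zero_forall_Icc_nonneg {f : α → δ} {a b : α} (hab : a ≤ b)
    (hf : ContinuousOn f (Icc a b)) (ha : f a < 0) (hb : 0 < f b) :
    ∃ c ∈ Ioo a b, f c = 0 ∧ ∀ x ∈ Icc c b, 0 ≤ f x := by
  set T := Icc a b ∩ f ⁻¹' {0}
  have hT : IsCompact T := isCompact_Icc.of_isClosed_subset
    (hf.preimage_isClosed_of_isClosed isClosed_Icc isClosed_singleton) inter_subset_left
  obtain ⟨c, hc, hfc⟩ := intermediate_value_Ioo hab hf ⟨ha, hb⟩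
  obtain ⟨⟨hac, hcb⟩, hzero : f (sSup T) = 0⟩ := hT.sSup_mem ⟨c, Ioo_subset_Icc_self hc, hfc⟩
  refine ⟨sSup T, ⟨hac.lt_of_ne ?_, hcb.lt_of_ne ?_⟩, hzero, ?_⟩
  · intro h; rw [← h] at hzero; exact ha.ne hzero
  · intro h; rw [h] at hzero; exact hb.ne' hzero
  rintro x ⟨hcx, hxb⟩
  by_contra! hx
  obtain ⟨y, ⟨hxy, hyb⟩, hfy⟩ := intermediate_value_Ioo hxb
    (hf.mono (Icc_subset_Icc (hac.trans hcx) le_rfl)) ⟨hx, hb⟩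
  have hyT : y ∈ T := ⟨⟨hac.trans (hcx.trans hxy.le), hyb.le⟩, hfy⟩
  exact (le_csSup hT.bddAbove hyT).not_gt (hcx.trans_lt hxy)

end LastZero

lemma Apoly_neg_neg (a b x : ℝ) : Apoly (-a) b (-x) = Apoly a b x := by
  unfold Apoly; ring

lemma continuous_Apoly (a b : ℝ) : Continuous (Apoly a b) := by
  unfold Apoly; fun_prop

lemma Apoly_neg_div_two_mul {a b : ℝ} (hb : b ≠ 0) :
    Apoly a b (-a / (2 * b)) = -((4 * b - a ^ 2) * (36 * b - 7 * a ^ 2)) / (16 * b) := by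
  unfold Apoly; field_simp; ring

lemma Apoly_neg_two_mul_div {a b : ℝ} (hb : b ≠ 0) :
    Apoly a b (-2 * a / b) = (8 * a ^ 4 + 94 * a ^ 2 * b - 9 * b ^ 2) / b := by
  unfold Apoly; field_simp; ring

lemma exists_roots_Apoly_of_pos {a b : ℝ} (ha : 0 < a) (hb1 : a ^ 2 / 4 < b)
    (hb2 : b < 10 * a ^ 2 / 9) :
    ∃ x₁ x₂ : ℝ, Apoly a b x₁ = 0 ∧ Apoly a b x₂ = 0 ∧ x₂ < x₁ ∧ x₁ < 0 ∧
      ∀ x ∈ Icc x₁ 0, 0 ≤ Apoly a b x := by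
  have hb : 0 < b := by nlinarith
  have hm : -a / (2 * b) < 0 := div_neg_of_neg_of_pos (by linarith) (by linarith)
  have hLm : -2 * a / b < -a / (2 * b) := by
    rw [div_lt_div_iff₀ hb (by linarith)]; nlinarith
  have hA0 : 0 < Apoly a b 0 := by unfold Apoly; nlinarith
  have hAm : Apoly a b (-a / (2 * b)) < 0 := by
    rw [Apoly_neg_div_two_mul hb.ne']
    exact div_neg_of_neg_of_pos (by nlinarith) (by linarith)
  have hAL : 0 < Apoly a b (-2 * a / b) := by
    rw [Apoly_neg_two_mul_div hb.ne']
    exact div_pos (by nlinarith) hb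
  obtain ⟨x₁, ⟨hmx₁, hx₁⟩, hx₁root, hnonneg⟩ := exists_mem_Ioo_eq_zero_forall_Icc_nonneg hm.le
    (continuous_Apoly a b).continuousOn hAm hA0
  obtain ⟨x₂, ⟨-, hx₂m⟩, hx₂root⟩ := intermediate_value_Ioo' hLm.le
    (continuous_Apoly a b).continuousOn ⟨hAm, hAL⟩
  exact ⟨x₁, x₂, hx₁root, hx₂root, hx₂m.trans hmx₁, hx₁, hnonneg⟩

lemma exists_roots_Apoly_of_neg {a b : ℝ} (ha : a < 0) (hb1 : a ^ 2 / 4 < b)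
    (hb2 : b < 10 * a ^ 2 / 9) :
    ∃ x₁ x₂ : ℝ, Apoly a b x₁ = 0 ∧ Apoly a b x₂ = 0 ∧ 0 < x₁ ∧ x₁ < x₂ ∧
      ∀ x ∈ Icc 0 x₁, 0 ≤ Apoly a b x := by
  obtain ⟨y₁, y₂, hy₁, hy₂, hy₂₁, hy₁0, hnonneg⟩ :=
    exists_roots_Apoly_of_pos (neg_pos.2 ha) (by rwa [neg_sq]) (by rwa [neg_sq])
  refine ⟨-y₁, -y₂, ?_, ?_, by linarith, by linarith, fun x hx => ?_⟩
  · rwa [← Apoly_neg_neg, neg_neg]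
  · rwa [← Apoly_neg_neg, neg_neg]
  · rw [← Apoly_neg_neg]
    exact hnonneg (-x) ⟨by linarith [hx.2], by linarith [hx.1]⟩

theorem stmt9 (a b : ℝ) (ha : a ≠ 0) (hb1 : a ^ 2 / 4 < b) (hb2 : b < 10 * a ^ 2 / 9) :
    ∃ x₁ x₂ : ℝ, Apoly a b x₁ = 0 ∧ Apoly a b x₂ = 0 ∧
      0 < |x₁| ∧ |x₁| < |x₂| ∧
      (0 < a → x₂ < x₁ ∧ x₁ < 0) ∧
      (a < 0 → 0 < x₁ ∧ x₁ < x₂) ∧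
      ∀ x ∈ Set.uIcc x₁ 0, 0 ≤ Apoly a b x := by
  rcases ha.lt_or_gt with hneg | hpos
  · obtain ⟨x₁, x₂, h₁, h₂, hx₁, hx₁₂, hnonneg⟩ := exists_roots_Apoly_of_neg hneg hb1 hb2
    refine ⟨x₁, x₂, h₁, h₂, abs_pos_of_pos hx₁, ?_, fun h => absurd h hneg.not_gt,
      fun _ => ⟨hx₁, hx₁₂⟩, ?_⟩
    · rwa [abs_of_pos hx₁, abs_of_pos (hx₁.trans hx₁₂)]
    · rwa [uIcc_of_ge hx₁.le]
  · obtain ⟨x₁, x₂, h₁, h₂, hx₂₁, hx₁, hnonneg⟩ := exists_roots_Apoly_of_pos hpos hb1 hb2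
    refine ⟨x₁, x₂, h₁, h₂, abs_pos_of_neg hx₁, ?_, fun _ => ⟨hx₂₁, hx₁⟩,
      fun h => absurd h hpos.not_gt, ?_⟩
    · rw [abs_of_neg hx₁, abs_of_neg (hx₂₁.trans hx₁)]; linarith
    · rwa [uIcc_of_le hx₁.le]
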